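/- Let g be a Lie algebra with N(g) = Ker(∇: Λ²g → g). Suppose δ and δ' are involutive Lie bialgebra structures on g that are cohomologous as 1-cocycles of g with values in N(g), i.e., there exists A ∈ N(g) with (δ' - δ)(X) = σ(X)(A) for all X ∈ g. Then the induced coboundary operators on Lie algebra homology coincide: d(δ) = d(δ'): H_*(g) → H_{*+1}(g). -/

import Mathlib

open TensorProduct

/-- The wedge product `X₁ ∧ ⋯ ∧ X_p` of a list of vectors. -/
noncomputable def wedgeList (g : Type) [AddCommGroup g] [Module ℚ g] (l : List g) :
    ExteriorAlgebra ℚ g := (l.map (ExteriorAlgebra.ι ℚ)).prod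

/-- The map `g ⊗ g → Λ* g`, `X ⊗ Y ↦ ι X * ι Y`. -/
noncomputable def toExt (g : Type) [AddCommGroup g] [Module ℚ g] :
    g ⊗[ℚ] g →ₗ[ℚ] ExteriorAlgebra ℚ g :=
  TensorProduct.lift ((LinearMap.mul ℚ (ExteriorAlgebra ℚ g)).compl₁₂
    (ExteriorAlgebra.ι ℚ) (ExteriorAlgebra.ι ℚ))

/-- The cyclic permutation `(123)` on `g ⊗ g ⊗ g`. -/
noncomputable def cycL (g : Type) [AddCommGroup g] [Module ℚ g] :
    (g ⊗[ℚ] g) ⊗[ℚ] g →ₗ[ℚ] (g ⊗[ℚ] g) ⊗[ℚ] g :=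
  (TensorProduct.comm ℚ g (g ⊗[ℚ] g)).toLinearMap ∘ₗ (TensorProduct.assoc ℚ g g g).toLinearMap

/-- The diagonal adjoint action `σ(Y)` on `g ⊗ g` (hence on `Λ²g ⊂ g ⊗ g`). -/
noncomputable def sig2 (g : Type) [LieRing g] [LieAlgebra ℚ g] (Y : g) :
    g ⊗[ℚ] g →ₗ[ℚ] g ⊗[ℚ] g :=
  TensorProduct.map (LieAlgebra.ad ℚ g Y) LinearMap.id +
    TensorProduct.map LinearMap.id (LieAlgebra.ad ℚ g Y)

attribute [local instance 100] LieRing.ofAssociativeRing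

/-- The bracket map `∇ : g ⊗ g → g`. -/
noncomputable def brm (g : Type) [LieRing g] [LieAlgebra ℚ g] :
    g ⊗[ℚ] g →ₗ[ℚ] g :=
  TensorProduct.lift (LieAlgebra.ad ℚ g).toLinearMap

/-- `IsInvBialgStruct g δ` : `δ` is an involutive Lie bialgebra structure on the Lie
algebra `g` (coskew, coJacobi, compatible with the bracket, and `∇δ = 0`, i.e. `δ` is a
`1`-cocycle of `g` with values in `N(g) = Ker(∇: Λ²g → g)`). -/
def IsInvBialgStruct (g : Type) [LieRing g] [LieAlgebra ℚ g]
    (δ : g →ₗ[ℚ] g ⊗[ℚ] g) : Prop :=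
  (∀ X : g, TensorProduct.comm ℚ g g (δ X) = - δ X) ∧
  ((LinearMap.id + cycL g + cycL g ∘ₗ cycL g) ∘ₗ
    TensorProduct.map δ LinearMap.id ∘ₗ δ = 0) ∧
  (∀ X Y : g, δ ⁅X, Y⁆ = sig2 g X (δ Y) - sig2 g Y (δ X)) ∧
  brm g ∘ₗ δ = 0

/-!
Let `ε_A` be left multiplication by `A ∈ Λ²g` on `Λg`. Since `∂` is a second-order operator,
the commutator `[∂, ε_A]` is first order: on `X₁ ∧ ⋯ ∧ X_p` it equals `-(∇A) ∧ X₁ ∧ ⋯ ∧ X_p`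
plus `∑ ± σ(X_l)A ∧ X₁ ∧ ⋯ X̂_l ⋯ ∧ X_p`. When `∇A = 0` and `δ' - δ = σ(·)A` this is exactly
`d(δ') - d(δ)`, so for a cycle `ξ` we get `d(δ')ξ - d(δ)ξ = ∂(A ∧ ξ)`.
-/

open ExteriorAlgebra (ι)

section Module

variable {g : Type} [AddCommGroup g] [Module ℚ g]

@[simp]
lemma wedgeList_cons (x : g) (l : List g) :
    wedgeList g (x :: l) = ι ℚ x * wedgeList g l := by
  simp [wedgeList]

lemma wedgeList_ofFn {p : ℕ} (X : Fin p → g) :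
    wedgeList g (List.ofFn X) = ExteriorAlgebra.ιMulti ℚ p X := by
  simp only [wedgeList, ExteriorAlgebra.ιMulti_apply, List.map_ofFn]
  rfl

@[simp]
lemma toExt_tmul (u v : g) : toExt g (u ⊗ₜ[ℚ] v) = ι ℚ u * ι ℚ v := by
  simp [toExt]

lemma ι_mul_ι_anticomm (x y : g) : ι ℚ x * ι ℚ y = -(ι ℚ y * ι ℚ x) :=
  eq_neg_of_add_eq_zero_left (ExteriorAlgebra.ι_add_mul_swap x y)

end Module

section Lie

variable {g : Type} [LieRing g] [LieAlgebra ℚ g]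

@[simp]
lemma brm_tmul (u v : g) : brm g (u ⊗ₜ[ℚ] v) = ⁅u, v⁆ := by
  simp [brm]

@[simp]
lemma sig2_tmul (Y u v : g) : sig2 g Y (u ⊗ₜ[ℚ] v) = ⁅Y, u⁆ ⊗ₜ[ℚ] v + u ⊗ₜ[ℚ] ⁅Y, v⁆ := by
  simp [sig2]

variable (g) in
/-- `pa` is the Chevalley–Eilenberg boundary `∂`. -/
def IsCEBoundary (pa : ExteriorAlgebra ℚ g →ₗ[ℚ] ExteriorAlgebra ℚ g) : Prop :=
  ∀ (p : ℕ) (X : Fin p → g),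
    pa (wedgeList g (List.ofFn X)) =
      ∑ i : Fin p, ∑ j : Fin p, if (i : ℕ) < (j : ℕ) then
        ((-1 : ℚ) ^ ((i : ℕ) + (j : ℕ))) •
          (ι ℚ ⁅X i, X j⁆ * wedgeList g (((List.ofFn X).eraseIdx (j : ℕ)).eraseIdx (i : ℕ)))
      else 0

variable (g) in
/-- `d` is the operator `d(δ)` induced by the cobracket `δ`. -/
def IsInducedCoboundary (δ : g →ₗ[ℚ] g ⊗[ℚ] g)
    (d : ExteriorAlgebra ℚ g →ₗ[ℚ] ExteriorAlgebra ℚ g) : Prop :=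
  ∀ (p : ℕ) (X : Fin p → g),
    d (wedgeList g (List.ofFn X)) =
      ∑ i : Fin p, ((-1 : ℚ) ^ ((i : ℕ) + 1)) •
        (toExt g (δ (X i)) * wedgeList g ((List.ofFn X).eraseIdx (i : ℕ)))

/-- `ad x` extended as a derivation of `Λg`, evaluated on `X 0 ∧ ⋯ ∧ X (p-1)`. -/
noncomputable def adWedge (x : g) {p : ℕ} (X : Fin p → g) : ExteriorAlgebra ℚ g :=
  ∑ j : Fin p, (-1 : ℚ) ^ (j : ℕ) • (ι ℚ ⁅x, X j⁆ * wedgeList g ((List.ofFn X).eraseIdx j))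

lemma adWedge_cons (x y : g) {p : ℕ} (X : Fin p → g) :
    adWedge x (Fin.cons y X : Fin (p + 1) → g) =
      ι ℚ ⁅x, y⁆ * wedgeList g (List.ofFn X) + ι ℚ y * adWedge x X := by
  simp only [adWedge, Fin.sum_univ_succ, List.ofFn_cons, Fin.cons_zero, Fin.cons_succ,
    Fin.val_zero, Fin.val_succ, pow_zero, one_smul, List.eraseIdx_cons_zero,
    List.eraseIdx_cons_succ, wedgeList_cons, Finset.mul_sum, mul_smul_comm]
  congr 1
  refine Finset.sum_congr rfl fun j _ => ?_
  rw [← mul_assoc, ι_mul_ι_anticomm, pow_succ]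
  simp [mul_assoc]

lemma IsCEBoundary.apply_ι_mul {pa : ExteriorAlgebra ℚ g →ₗ[ℚ] ExteriorAlgebra ℚ g}
    (hpa : IsCEBoundary g pa) (x : g) {p : ℕ} (X : Fin p → g) :
    pa (ι ℚ x * wedgeList g (List.ofFn X)) =
      -(ι ℚ x * pa (wedgeList g (List.ofFn X))) - adWedge x X := by
  have h := hpa (p + 1) (Fin.cons x X)
  simp only [Fin.sum_univ_succ, List.ofFn_cons, Fin.cons_zero, Fin.cons_succ,
    Fin.val_zero, Fin.val_succ, List.eraseIdx_cons_zero, List.eraseIdx_cons_succ,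
    wedgeList_cons, Nat.not_lt_zero, Nat.zero_lt_succ,
    Nat.add_lt_add_iff_right, if_true, if_false, zero_add] at h
  rw [h, hpa, adWedge, sub_eq_add_neg, add_comm, Finset.mul_sum]
  simp only [← Finset.sum_neg_distrib]
  congr 1
  · refine Finset.sum_congr rfl fun i _ => ?_
    rw [Finset.mul_sum, ← Finset.sum_neg_distrib]
    refine Finset.sum_congr rfl fun j _ => ?_
    split_ifs
    · rw [show (-1 : ℚ) ^ ((i : ℕ) + 1 + ((j : ℕ) + 1)) = (-1) ^ ((i : ℕ) + (j : ℕ)) by ring,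
        ← mul_assoc, ι_mul_ι_anticomm, neg_mul, mul_assoc, mul_smul_comm, smul_neg]
    · simp
  · refine Finset.sum_congr rfl fun j _ => ?_
    rw [pow_succ, mul_neg_one, neg_smul]

lemma IsCEBoundary.apply_ι_mul_ι_mul {pa : ExteriorAlgebra ℚ g →ₗ[ℚ] ExteriorAlgebra ℚ g}
    (hpa : IsCEBoundary g pa) (x y : g) {p : ℕ} (X : Fin p → g) :
    pa (ι ℚ x * (ι ℚ y * wedgeList g (List.ofFn X))) =
      ι ℚ x * (ι ℚ y * pa (wedgeList g (List.ofFn X))) + ι ℚ x * adWedge y X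
        - ι ℚ y * adWedge x X - ι ℚ ⁅x, y⁆ * wedgeList g (List.ofFn X) := by
  rw [← wedgeList_cons, ← List.ofFn_cons, hpa.apply_ι_mul, List.ofFn_cons, wedgeList_cons,
    hpa.apply_ι_mul, adWedge_cons]
  noncomm_ring

lemma sum_toExt_sig2_tmul_mul (u v : g) {p : ℕ} (X : Fin p → g) :
    ∑ l : Fin p, (-1 : ℚ) ^ ((l : ℕ) + 1) •
        (toExt g (sig2 g (X l) (u ⊗ₜ v)) * wedgeList g ((List.ofFn X).eraseIdx l)) =
      ι ℚ u * adWedge v X - ι ℚ v * adWedge u X := by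
  simp only [adWedge, Finset.mul_sum, ← Finset.sum_sub_distrib]
  refine Finset.sum_congr rfl fun l _ => ?_
  rw [sig2_tmul, map_add, toExt_tmul, toExt_tmul, ← lie_skew u, ← lie_skew v, map_neg, map_neg,
    ι_mul_ι_anticomm ⁅X l, u⁆ v, pow_succ]
  simp only [neg_mul, mul_neg, add_mul, mul_smul_comm, mul_assoc]
  module

lemma IsCEBoundary.apply_toExt_mul {pa : ExteriorAlgebra ℚ g →ₗ[ℚ] ExteriorAlgebra ℚ g}
    (hpa : IsCEBoundary g pa) (A : g ⊗[ℚ] g) {p : ℕ} (X : Fin p → g) :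
    pa (toExt g A * wedgeList g (List.ofFn X)) =
      toExt g A * pa (wedgeList g (List.ofFn X)) - ι ℚ (brm g A) * wedgeList g (List.ofFn X)
        + ∑ l : Fin p, (-1 : ℚ) ^ ((l : ℕ) + 1) •
            (toExt g (sig2 g (X l) A) * wedgeList g ((List.ofFn X).eraseIdx l)) := by
  induction A using TensorProduct.induction_on with
  | zero => simp
  | tmul u v =>
    rw [toExt_tmul, brm_tmul, mul_assoc, hpa.apply_ι_mul_ι_mul, sum_toExt_sig2_tmul_mul,
      mul_assoc]
    abel
  | add B C hB hC =>
    simp only [map_add, add_mul, hB, hC, smul_add, Finset.sum_add_distrib]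
    abel

lemma IsInducedCoboundary.sub_eq_commutator
    {pa d d' : ExteriorAlgebra ℚ g →ₗ[ℚ] ExteriorAlgebra ℚ g} {δ δ' : g →ₗ[ℚ] g ⊗[ℚ] g} {A : g ⊗[ℚ] g} (hpa : IsCEBoundary g pa)
    (hd : IsInducedCoboundary g δ d) (hd' : IsInducedCoboundary g δ' d')
    (hAN : brm g A = 0) (hcob : ∀ X : g, δ' X - δ X = sig2 g X A) :
    d' - d = pa ∘ₗ LinearMap.mulLeft ℚ (toExt g A) - LinearMap.mulLeft ℚ (toExt g A) ∘ₗ pa := by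
  refine LinearMap.ext_on_range (ExteriorAlgebra.ιMulti_span ℚ g) fun ⟨p, X⟩ => ?_
  simp only [LinearMap.sub_apply, LinearMap.comp_apply, LinearMap.mulLeft_apply]
  rw [← wedgeList_ofFn, hpa.apply_toExt_mul, hAN, hd, hd']
  simp only [← hcob, map_sub, sub_mul, smul_sub, Finset.sum_sub_distrib, map_zero, zero_mul]
  abel

end Lie

theorem stmt12_general (g : Type) [LieRing g] [LieAlgebra ℚ g]
    (δ δ' : g →ₗ[ℚ] g ⊗[ℚ] g)
    (A : g ⊗[ℚ] g)
    (hAN : brm g A = 0)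
    (hcob : ∀ X : g, δ' X - δ X = sig2 g X A)
    (pa d d' : ExteriorAlgebra ℚ g →ₗ[ℚ] ExteriorAlgebra ℚ g)
    (hpa : ∀ (p : ℕ) (X : Fin p → g),
      pa (wedgeList g (List.ofFn X)) =
        ∑ i : Fin p, ∑ j : Fin p, if (i : ℕ) < (j : ℕ) then
          ((-1 : ℚ) ^ ((i : ℕ) + (j : ℕ))) •
            (ExteriorAlgebra.ι ℚ ⁅X i, X j⁆ *
              wedgeList g (((List.ofFn X).eraseIdx (j : ℕ)).eraseIdx (i : ℕ)))
        else 0)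
    (hd : ∀ (p : ℕ) (X : Fin p → g),
      d (wedgeList g (List.ofFn X)) =
        ∑ i : Fin p, ((-1 : ℚ) ^ ((i : ℕ) + 1)) •
          (toExt g (δ (X i)) * wedgeList g ((List.ofFn X).eraseIdx (i : ℕ))))
    (hd' : ∀ (p : ℕ) (X : Fin p → g),
      d' (wedgeList g (List.ofFn X)) =
        ∑ i : Fin p, ((-1 : ℚ) ^ ((i : ℕ) + 1)) •
          (toExt g (δ' (X i)) * wedgeList g ((List.ofFn X).eraseIdx (i : ℕ)))) :
    ∀ ξ : ExteriorAlgebra ℚ g, pa ξ = 0 → ∃ η, d' ξ - d ξ = pa η := by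
  intro ξ hξ
  refine ⟨toExt g A * ξ, ?_⟩
  have h := LinearMap.congr_fun (IsInducedCoboundary.sub_eq_commutator hpa hd hd' hAN hcob) ξ
  simpa only [LinearMap.sub_apply, LinearMap.comp_apply, LinearMap.mulLeft_apply, hξ, mul_zero,
    sub_zero] using h

/-- if two involutive Lie bialgebra structures `δ, δ'` on `g` are
cohomologous as 1-cocycles with values in `N(g) = Ker ∇` (i.e. `δ' - δ` is the coboundary
of some `A ∈ N(g)`), then the induced coboundary operators on Lie algebra homology
coincide: `d(δ) = d(δ')` on `H_*(g)`, i.e. on every cycle `d'ξ - dξ` is a boundary. -/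
theorem stmt12 (g : Type) [LieRing g] [LieAlgebra ℚ g]
    (δ δ' : g →ₗ[ℚ] g ⊗[ℚ] g)
    (hδ : IsInvBialgStruct g δ) (hδ' : IsInvBialgStruct g δ')
    (A : g ⊗[ℚ] g)
    (hAalt : TensorProduct.comm ℚ g g A = - A)
    (hAN : brm g A = 0)
    (hcob : ∀ X : g, δ' X - δ X = sig2 g X A)
    (pa d d' : ExteriorAlgebra ℚ g →ₗ[ℚ] ExteriorAlgebra ℚ g)
    (hpa : ∀ (p : ℕ) (X : Fin p → g),
      pa (wedgeList g (List.ofFn X)) =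
        ∑ i : Fin p, ∑ j : Fin p, if (i : ℕ) < (j : ℕ) then
          ((-1 : ℚ) ^ ((i : ℕ) + (j : ℕ))) •
            (ExteriorAlgebra.ι ℚ ⁅X i, X j⁆ *
              wedgeList g (((List.ofFn X).eraseIdx (j : ℕ)).eraseIdx (i : ℕ)))
        else 0)
    (hd : ∀ (p : ℕ) (X : Fin p → g),
      d (wedgeList g (List.ofFn X)) =
        ∑ i : Fin p, ((-1 : ℚ) ^ ((i : ℕ) + 1)) •
          (toExt g (δ (X i)) * wedgeList g ((List.ofFn X).eraseIdx (i : ℕ))))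
    (hd' : ∀ (p : ℕ) (X : Fin p → g),
      d' (wedgeList g (List.ofFn X)) =
        ∑ i : Fin p, ((-1 : ℚ) ^ ((i : ℕ) + 1)) •
          (toExt g (δ' (X i)) * wedgeList g ((List.ofFn X).eraseIdx (i : ℕ)))) :
    ∀ ξ : ExteriorAlgebra ℚ g, pa ξ = 0 → ∃ η, d' ξ - d ξ = pa η :=
  stmt12_general g δ δ' A hAN hcob pa d d' hpa hd hd'
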